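/- A communication SINR constraint |h^T f_k|^2 / (Σ_{i≠k} |h^T f_i|^2 + σ²) ≥ γ̄, where the phase of h^T f_k can be chosen arbitrary (nonnegative real without loss of generality), is equivalent to the second-order cone constraint √(1+γ̄) · Re(h^T f_k) ≥ √γ̄ · ‖(h^T f_1, …, h^T f_K, σ)‖. -/

import Mathlib

open Matrix Finset

/-- The SINR constraint `|hᵀ f_k|² / (∑_{i≠k} |hᵀ f_i|² + σ²) ≥ γ̄`, with
`hᵀ f_k` real and nonnegative, is equivalent to the second-order cone
constraint `√(1+γ̄) · Re(hᵀ f_k) ≥ √γ̄ · ‖(hᵀ f_1, …, hᵀ f_K, σ)‖`. -/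
theorem sinr_constraint_iff_soc {n K : ℕ} (h : Fin n → ℂ) (f : Fin K → Fin n → ℂ)
    (k : Fin K) (σ γ : ℝ) (hσ : 0 < σ) (hγ : 0 < γ)
    (hreal : (h ⬝ᵥ f k).im = 0) (hpos : 0 ≤ (h ⬝ᵥ f k).re) :
    ‖h ⬝ᵥ f k‖ ^ 2
        / (∑ i ∈ Finset.univ.erase k, ‖h ⬝ᵥ f i‖ ^ 2 + σ ^ 2) ≥ γ ↔
    Real.sqrt (1 + γ) * (h ⬝ᵥ f k).re
        ≥ Real.sqrt γ * Real.sqrt (∑ i, ‖h ⬝ᵥ f i‖ ^ 2 + σ ^ 2) := by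
  have habs : ‖h ⬝ᵥ f k‖ = (h ⬝ᵥ f k).re := by
    rw [Complex.norm_def, Complex.normSq_apply, hreal]
    simp [Real.sqrt_mul_self hpos]
  have hsum : ∑ i, ‖h ⬝ᵥ f i‖ ^ 2
      = (∑ i ∈ Finset.univ.erase k, ‖h ⬝ᵥ f i‖ ^ 2)
        + (h ⬝ᵥ f k).re ^ 2 := by
    rw [← Finset.sum_erase_add _ _ (Finset.mem_univ k), habs]
  rw [habs, hsum]
  have hS0' : 0 ≤ ∑ i ∈ Finset.univ.erase k, ‖h ⬝ᵥ f i‖ ^ 2 :=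
    Finset.sum_nonneg fun i _ => sq_nonneg _
  set x := (h ⬝ᵥ f k).re with hx
  set S := ∑ i ∈ Finset.univ.erase k, ‖h ⬝ᵥ f i‖ ^ 2 with hSdef
  clear_value x S
  clear hx hSdef hreal habs hsum
  have hS0 : 0 ≤ S := hS0'
  have hD : 0 < S + σ ^ 2 := by positivity
  constructor
  · intro hle
    have h1 : γ * (S + σ ^ 2) ≤ x ^ 2 := (le_div_iff₀ hD).mp hle
    have h2 : γ * (S + x ^ 2 + σ ^ 2) ≤ (1 + γ) * x ^ 2 := by nlinarith
    calc Real.sqrt γ * Real.sqrt (S + x ^ 2 + σ ^ 2)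
        = Real.sqrt (γ * (S + x ^ 2 + σ ^ 2)) := (Real.sqrt_mul hγ.le _).symm
      _ ≤ Real.sqrt ((1 + γ) * x ^ 2) := Real.sqrt_le_sqrt h2
      _ = Real.sqrt (1 + γ) * x := by
          rw [Real.sqrt_mul (by linarith), Real.sqrt_sq hpos]
  · intro hge
    have hx0 : 0 ≤ Real.sqrt γ * Real.sqrt (S + x ^ 2 + σ ^ 2) := by positivity
    have hsq := mul_self_le_mul_self hx0 hge
    have e1 : Real.sqrt γ * Real.sqrt γ = γ := Real.mul_self_sqrt hγ.le
    have e2 : Real.sqrt (S + x ^ 2 + σ ^ 2) * Real.sqrt (S + x ^ 2 + σ ^ 2)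
        = S + x ^ 2 + σ ^ 2 := Real.mul_self_sqrt (by positivity)
    have e3 : Real.sqrt (1 + γ) * Real.sqrt (1 + γ) = 1 + γ :=
      Real.mul_self_sqrt (by linarith)
    have h2 : γ * (S + x ^ 2 + σ ^ 2) ≤ (1 + γ) * x ^ 2 := by nlinarith
    rw [ge_iff_le, le_div_iff₀ hD]
    nlinarith
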